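/- Let n ≥ 72 be divisible by 8, let J'_n, B_n and E_0 be as defined, and let F ⊆ E_0. Consider the signed graph G_F that differs from the balanced state B_n exactly on the edges of F (the red edges). Call an imbalanced triad of G_F good if the red edge it contains has strictly greater rank than each of the other two edges of the triad, and bad otherwise. Then every edge in F is contained in at least n/2 − 4 ≥ 32 good triads and in at most 16 bad triads; in particular, every edge in F is contained in at least twice as many good triads as bad triads. -/

import Mathlib

open Finset

/-- A signed graph on `n` vertices: `true` = friendship (+1), `false` = enmity (−1). -/
abbrev SignedGraph (n : ℕ) := Fin n → Fin n → Bool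

/-- The sign assignment is symmetric (it is an assignment to undirected edges). -/
def Symm {n : ℕ} (G : SignedGraph n) : Prop := ∀ u v, G u v = G v u

/-- The triad `{u,v,w}` is balanced: it contains an even number (0 or 2) of enmity edges. -/
def BalancedTriad {n : ℕ} (G : SignedGraph n) (u v w : Fin n) : Prop :=
  Bool.xor (G u v) (Bool.xor (G v w) (G u w)) = true

instance {n : ℕ} (G : SignedGraph n) (u v w : Fin n) :
    Decidable (BalancedTriad G u v w) :=
  inferInstanceAs (Decidable (_ = true))

/-- The rank of the edge `(u,v)`: the number of imbalanced triads containing it. -/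
def rank {n : ℕ} (G : SignedGraph n) (u v : Fin n) : ℕ :=
  (univ.filter (fun w => w ≠ u ∧ w ≠ v ∧ ¬ BalancedTriad G u v w)).card

/-- A signed graph is balanced if every triad is balanced. -/
def IsBalanced {n : ℕ} (G : SignedGraph n) : Prop :=
  ∀ u v w : Fin n, u ≠ v → v ≠ w → u ≠ w → BalancedTriad G u v w

/-- A signed graph is jammed if it is not balanced and every edge `e`
satisfies `2 * r_e < n - 2`. -/
def IsJammed {n : ℕ} (G : SignedGraph n) : Prop :=
  ¬ IsBalanced G ∧ ∀ u v : Fin n, u ≠ v → 2 * rank G u v < n - 2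

/-- Flipping (reversing the sign of) the undirected edge `p`. -/
def flipEdge {n : ℕ} (G : SignedGraph n) (p : Sym2 (Fin n)) : SignedGraph n :=
  fun x y => if s(x, y) = p then !(G x y) else G x y

/-- A CTD-admissible flipEdge: the edge lies in some imbalanced triad and `2 r_e ≥ n - 2`. -/
def CTDAdmissible {n : ℕ} (G : SignedGraph n) (p : Sym2 (Fin n)) : Prop :=
  ∃ u v : Fin n, p = s(u, v) ∧ u ≠ v ∧
    (∃ w, w ≠ u ∧ w ≠ v ∧ ¬ BalancedTriad G u v w) ∧
    n - 2 ≤ 2 * rank G u v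

/-- A BED-admissible flipEdge: there is an imbalanced triad containing the edge
in which the edge has maximal rank. -/
def BEDAdmissible {n : ℕ} (G : SignedGraph n) (p : Sym2 (Fin n)) : Prop :=
  ∃ u v w : Fin n, p = s(u, v) ∧ u ≠ v ∧ w ≠ u ∧ w ≠ v ∧
    ¬ BalancedTriad G u v w ∧
    rank G v w ≤ rank G u v ∧ rank G u w ≤ rank G u v

/-- `FlipSeq Adm G L H`: the list of edges `L` is a sequence of `Adm`-admissible flips
transforming `G` into `H`. -/
inductive FlipSeq {n : ℕ} (Adm : SignedGraph n → Sym2 (Fin n) → Prop) :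
    SignedGraph n → List (Sym2 (Fin n)) → SignedGraph n → Prop
  | nil (G : SignedGraph n) : FlipSeq Adm G [] G
  | cons {G H : SignedGraph n} {L : List (Sym2 (Fin n))} (p : Sym2 (Fin n)) :
      Adm G p → FlipSeq Adm (flipEdge G p) L H → FlipSeq Adm G (p :: L) H

/-- Circular distance between cluster indices. -/
def circDist {m : ℕ} (i j : Fin m) : ℕ := min (i - j : Fin m).val (j - i : Fin m).val

/-- The circular graph: given a cluster assignment `c`, an edge is a friendship iff
its endpoints lie in clusters at circular distance at most `k`. -/
def circular {n m : ℕ} (c : Fin n → Fin m) (k : ℕ) : SignedGraph n :=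
  fun u v => decide (circDist (c u) (c v) ≤ k)

/-- The jammed state `J_n`: three fixed clusters of size `n/3`, friendships inside
clusters, enmities across. -/
def Jn (n : ℕ) : SignedGraph n :=
  fun u v => decide (u.val / (n / 3) = v.val / (n / 3))

/-- The signed graph obtained from `G` by flipping exactly the edges in `F`. -/
def perturb {n : ℕ} (G : SignedGraph n) (F : Finset (Sym2 (Fin n))) : SignedGraph n :=
  fun u v => if s(u, v) ∈ F then !(G u v) else G u v

/-- The set of (undirected, non-diagonal) edges on which two signed graphs differ. -/
def diffEdges {n : ℕ} (G C : SignedGraph n) : Finset (Sym2 (Fin n)) :=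
  univ.filter (fun p => ∃ u v : Fin n, p = s(u, v) ∧ u ≠ v ∧ G u v ≠ C u v)

/-- `C` is a closest balanced state to `G`: `C` is balanced and minimizes the number of
edges on which the signs differ from `G`. -/
def IsClosestBalanced {n : ℕ} (G C : SignedGraph n) : Prop :=
  Symm C ∧ IsBalanced C ∧
    ∀ C' : SignedGraph n, Symm C' → IsBalanced C' →
      (diffEdges G C).card ≤ (diffEdges G C').card

/-- The two sides of the balanced state `B_n`: clusters `0, 1, 5` versus `2, 3, 4`. -/
def sixPart (i : Fin 6) : Bool := decide (i = 0 ∨ i = 1 ∨ i = 5)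

/-- The balanced state `B_n` whose friendship parts are `V₀ ∪ V₁ ∪ V₅` and `V₂ ∪ V₃ ∪ V₄`. -/
def Bgraph {n : ℕ} (c : Fin n → Fin 6) : SignedGraph n :=
  fun u v => sixPart (c u) == sixPart (c v)

/-- The number of good triads containing the red edge `(u,v)`: imbalanced triads in which
the red edge has strictly greater rank than each of the other two edges. -/
def goodCount {n : ℕ} (G : SignedGraph n) (u v : Fin n) : ℕ :=
  (univ.filter (fun w => w ≠ u ∧ w ≠ v ∧ ¬ BalancedTriad G u v w ∧
    rank G v w < rank G u v ∧ rank G u w < rank G u v)).card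

/-- The number of bad triads containing the red edge `(u,v)`: imbalanced triads that
are not good. -/
def badCount {n : ℕ} (G : SignedGraph n) (u v : Fin n) : ℕ :=
  (univ.filter (fun w => w ≠ u ∧ w ≠ v ∧ ¬ BalancedTriad G u v w ∧
    ¬ (rank G v w < rank G u v ∧ rank G u w < rank G u v))).card

/-! Since `B_n` is balanced, a triad of `G_F` is imbalanced iff it contains an odd number of red
edges. The edges of `E_0` all join `S = V₁ ∪ V₄` to `T = V₂ ∪ V₅`, so the red edges form a
bipartite graph and an imbalanced triad contains exactly one of them. Writing `d` for the red
degree, a red edge `uv` (`u ∈ S`, `v ∈ T`) therefore has rank `n - d u - d v`, whereas a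
non-red edge `xy` has rank at most `d x + d y`, and at most `2|S| - d x - d y` when `x, y ∈ S`.
With `|S|, |T| ≤ m` and `3m < n` every triad `uvw` with `w ∉ S ∪ T` is good, and a bad one with
`w ∈ T` forces `2 d u ≥ n - 2m`, leaving at most `(4m - n)/2` candidates `w ∈ T` off the red
neighbourhood of `u` (symmetrically in `S`). With `m = |V₁| + |V₄| = 2(n/8 + 1)` this leaves at
most `4m - n = 8` bad triads and at least `n - 2m = n/2 - 4` good ones. -/

section Perturbation

variable {n : ℕ}

def redNbrs (F : Finset (Sym2 (Fin n))) (x : Fin n) : Finset (Fin n) :=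
  univ.filter fun z => s(x, z) ∈ F

@[simp]
lemma mem_redNbrs {F : Finset (Sym2 (Fin n))} {x z : Fin n} :
    z ∈ redNbrs F x ↔ s(x, z) ∈ F := by
  simp [redNbrs]

structure IsBipartiteBetween (F : Finset (Sym2 (Fin n))) (S T : Finset (Fin n)) : Prop where
  disjoint : Disjoint S T
  mem_or_mem : ∀ x y, s(x, y) ∈ F → x ∈ S ∧ y ∈ T ∨ x ∈ T ∧ y ∈ S

variable {C : SignedGraph n} {F : Finset (Sym2 (Fin n))} {S T : Finset (Fin n)}
  {u v w x y : Fin n}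

namespace IsBipartiteBetween

lemma symm (hF : IsBipartiteBetween F S T) : IsBipartiteBetween F T S :=
  ⟨hF.disjoint.symm, fun x y hxy => (hF.mem_or_mem x y hxy).symm⟩

lemma mem_right (hF : IsBipartiteBetween F S T) (hx : x ∈ S) (hxy : s(x, y) ∈ F) : y ∈ T :=
  ((hF.mem_or_mem x y hxy).resolve_right fun h => disjoint_left.1 hF.disjoint hx h.1).2

lemma redNbrs_subset (hF : IsBipartiteBetween F S T) (hx : x ∈ S) : redNbrs F x ⊆ T :=
  fun _ hz => hF.mem_right hx (mem_redNbrs.1 hz)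

lemma disjoint_redNbrs (hF : IsBipartiteBetween F S T) (hx : x ∈ S) (hy : y ∈ T) :
    Disjoint (redNbrs F x) (redNbrs F y) :=
  hF.disjoint.symm.mono (hF.redNbrs_subset hx) (hF.symm.redNbrs_subset hy)

end IsBipartiteBetween

lemma not_balancedTriad_perturb_iff (hC : IsBalanced C) (huv : u ≠ v) (hvw : v ≠ w)
    (huw : u ≠ w) :
    ¬ BalancedTriad (perturb C F) u v w ↔ (s(u, v) ∈ F ↔ (s(v, w) ∈ F ↔ s(u, w) ∈ F)) := by
  have h := hC u v w huv hvw huw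
  unfold BalancedTriad perturb at *
  revert h
  by_cases h₁ : s(u, v) ∈ F <;> by_cases h₂ : s(v, w) ∈ F <;> by_cases h₃ : s(u, w) ∈ F <;>
    cases C u v <;> cases C v w <;> cases C u w <;> simp [h₁, h₂, h₃]

lemma rank_perturb_le_of_notMem (hC : IsBalanced C) (hxy : x ≠ y) (hF : s(x, y) ∉ F) :
    rank (perturb C F) x y ≤ #(redNbrs F x) + #(redNbrs F y) := by
  refine (card_le_card fun w hw => ?_).trans (card_union_le _ _)
  obtain ⟨hwx, hwy, hw⟩ := (mem_filter.1 hw).2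
  rw [not_balancedTriad_perturb_iff hC hxy (Ne.symm hwy) (Ne.symm hwx)] at hw
  simp only [mem_union, mem_redNbrs]
  tauto

lemma rank_perturb_le_of_redNbrs_subset (hC : IsBalanced C) (hxy : x ≠ y) (hF : s(x, y) ∉ F)
    {R : Finset (Fin n)} (hx : redNbrs F x ⊆ R) (hy : redNbrs F y ⊆ R) :
    rank (perturb C F) x y ≤ (#R - #(redNbrs F x)) + (#R - #(redNbrs F y)) := by
  rw [← card_sdiff_of_subset hx, ← card_sdiff_of_subset hy]
  refine (card_le_card fun w hw => ?_).trans (card_union_le _ _)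
  obtain ⟨hwx, hwy, hw⟩ := (mem_filter.1 hw).2
  rw [not_balancedTriad_perturb_iff hC hxy (Ne.symm hwy) (Ne.symm hwx)] at hw
  have hxR := @hx w
  have hyR := @hy w
  simp only [mem_union, mem_sdiff, mem_redNbrs] at hxR hyR ⊢
  tauto

lemma imbalanced_perturb_iff_of_mem (hC : IsBalanced C) (hF : IsBipartiteBetween F S T)
    (hu : u ∈ S) (huv : s(u, v) ∈ F) :
    (w ≠ u ∧ w ≠ v ∧ ¬ BalancedTriad (perturb C F) u v w) ↔
      w ∉ redNbrs F u ∪ redNbrs F v := by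
  have hv := hF.mem_right hu huv
  have hdisj : ¬ (w ∈ redNbrs F u ∧ w ∈ redNbrs F v) :=
    fun h => disjoint_left.1 (hF.disjoint_redNbrs hu hv) h.1 h.2
  have huv' : u ≠ v := fun h => disjoint_left.1 hF.disjoint hu (h ▸ hv)
  simp only [mem_union, mem_redNbrs] at hdisj ⊢
  constructor
  · rintro ⟨hwu, hwv, hw⟩
    rw [not_balancedTriad_perturb_iff hC huv' (Ne.symm hwv) (Ne.symm hwu)] at hw
    tauto
  · intro hw
    have hwu : w ≠ u := by rintro rfl; exact hw (Or.inr (Sym2.eq_swap ▸ huv))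
    have hwv : w ≠ v := by rintro rfl; exact hw (Or.inl huv)
    rw [not_balancedTriad_perturb_iff hC huv' (Ne.symm hwv) (Ne.symm hwu)]
    tauto

lemma rank_perturb_of_mem (hC : IsBalanced C) (hF : IsBipartiteBetween F S T) (hu : u ∈ S)
    (huv : s(u, v) ∈ F) :
    rank (perturb C F) u v = n - (#(redNbrs F u) + #(redNbrs F v)) := by
  have himb : univ.filter (fun w => w ≠ u ∧ w ≠ v ∧ ¬ BalancedTriad (perturb C F) u v w) =
      univ \ (redNbrs F u ∪ redNbrs F v) := by
    ext w
    simp only [mem_filter, mem_univ, true_and, mem_sdiff]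
    exact imbalanced_perturb_iff_of_mem hC hF hu huv
  rw [rank, himb, card_univ_sdiff,
    card_union_of_disjoint (hF.disjoint_redNbrs hu (hF.mem_right hu huv)), Fintype.card_fin]

lemma goodCount_add_badCount (G : SignedGraph n) (u v : Fin n) :
    goodCount G u v + badCount G u v = rank G u v := by
  rw [rank, ← card_filter_add_card_filter_not
    (fun w => rank G v w < rank G u v ∧ rank G u w < rank G u v), filter_filter, filter_filter]
  simp only [goodCount, badCount, and_assoc]

def rankGeNbrs (G : SignedGraph n) (u v : Fin n) (R : Finset (Fin n)) : Finset (Fin n) :=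
  R.filter fun w => rank G u v ≤ rank G u w

lemma card_rankGeNbrs_le (G : SignedGraph n) (u v : Fin n) (R : Finset (Fin n)) :
    #(rankGeNbrs G u v R) ≤ #R :=
  card_filter_le _ _

variable {m : ℕ}

lemma rank_perturb_lt_of_notMem (hC : IsBalanced C) (hF : IsBipartiteBetween F S T)
    (hS : #S ≤ m) (hT : #T ≤ m) (hm : 3 * m < n) (hu : u ∈ S) (huv : s(u, v) ∈ F)
    (hwS : w ∉ S) (hwv : w ≠ v) :
    rank (perturb C F) v w < rank (perturb C F) u v := by
  have hv := hF.mem_right hu huv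
  have hvw : s(v, w) ∉ F := fun h => hwS (hF.symm.mem_right hv h)
  have hdu := card_le_card (hF.redNbrs_subset hu)
  have hdv := card_le_card (hF.symm.redNbrs_subset hv)
  rw [rank_perturb_of_mem hC hF hu huv]
  by_cases hwT : w ∈ T
  · have := rank_perturb_le_of_redNbrs_subset hC hwv.symm hvw
      (hF.symm.redNbrs_subset hv) (hF.symm.redNbrs_subset hwT)
    omega
  · have hdw : #(redNbrs F w) = 0 := by
      rw [card_eq_zero]
      exact eq_empty_of_forall_notMem fun z hz => by
        rcases hF.mem_or_mem w z (mem_redNbrs.1 hz) with h | h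
        exacts [hwS h.1, hwT h.1]
    have := rank_perturb_le_of_notMem hC hwv.symm hvw
    omega

lemma rank_perturb_swap_of_mem (hC : IsBalanced C) (hF : IsBipartiteBetween F S T)
    (hu : u ∈ S) (huv : s(u, v) ∈ F) :
    rank (perturb C F) v u = rank (perturb C F) u v := by
  rw [rank_perturb_of_mem hC hF hu huv,
    rank_perturb_of_mem hC hF.symm (hF.mem_right hu huv) (Sym2.eq_swap ▸ huv), add_comm]

lemma two_mul_card_rankGeNbrs_le (hC : IsBalanced C) (hF : IsBipartiteBetween F S T)
    (hS : #S ≤ m) (hT : #T ≤ m) (hu : u ∈ S) (huv : s(u, v) ∈ F) :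
    2 * #(rankGeNbrs (perturb C F) u v (T \ redNbrs F u)) ≤ 4 * m - n := by
  rcases (rankGeNbrs (perturb C F) u v (T \ redNbrs F u)).eq_empty_or_nonempty
    with h | ⟨w, hw⟩
  · simp [h]
  obtain ⟨hwT, huw⟩ := mem_sdiff.1 (mem_filter.1 hw).1
  have hdu := card_le_card (hF.redNbrs_subset hu)
  have hdv := card_le_card (hF.symm.redNbrs_subset (hF.mem_right hu huv))
  have hdw := card_le_card (hF.symm.redNbrs_subset hwT)
  have hle : rank (perturb C F) u v ≤ #(redNbrs F u) + #(redNbrs F w) :=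
    (mem_filter.1 hw).2.trans <| rank_perturb_le_of_notMem hC
      (fun h => disjoint_left.1 hF.disjoint hu (h ▸ hwT)) (mem_redNbrs.not.1 huw)
  have hcard : #(rankGeNbrs (perturb C F) u v (T \ redNbrs F u)) ≤ #T - #(redNbrs F u) :=
    (card_rankGeNbrs_le _ _ _ _).trans (card_sdiff_of_subset (hF.redNbrs_subset hu)).le
  rw [rank_perturb_of_mem hC hF hu huv] at hle
  omega

lemma badCount_perturb_le (hC : IsBalanced C) (hF : IsBipartiteBetween F S T)
    (hS : #S ≤ m) (hT : #T ≤ m) (hm : 3 * m < n) (hu : u ∈ S) (huv : s(u, v) ∈ F) :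
    badCount (perturb C F) u v ≤
      #(rankGeNbrs (perturb C F) u v (T \ redNbrs F u)) +
        #(rankGeNbrs (perturb C F) v u (S \ redNbrs F v)) := by
  have hv := hF.mem_right hu huv
  have hvu : s(v, u) ∈ F := Sym2.eq_swap ▸ huv
  refine (card_le_card fun w hw => ?_).trans (card_union_le _ _)
  obtain ⟨hwu, hwv, himb, hbad⟩ := (mem_filter.1 hw).2
  have hwN := (imbalanced_perturb_iff_of_mem hC hF hu huv).1 ⟨hwu, hwv, himb⟩
  rw [mem_union, not_or] at hwN
  simp only [rankGeNbrs, mem_union, mem_filter, mem_sdiff]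
  by_cases hwS : w ∈ S
  · have hlt := rank_perturb_lt_of_notMem hC hF.symm hT hS hm hv hvu
      (disjoint_left.1 hF.disjoint hwS) hwu
    rw [rank_perturb_swap_of_mem hC hF hu huv] at hlt ⊢
    exact Or.inr ⟨⟨hwS, hwN.2⟩, by omega⟩
  · have hlt := rank_perturb_lt_of_notMem hC hF hS hT hm hu huv hwS hwv
    have hwT : w ∈ T := by
      by_contra hwT
      have := rank_perturb_lt_of_notMem hC hF.symm hT hS hm hv hvu hwT hwu
      rw [rank_perturb_swap_of_mem hC hF hu huv] at this
      exact hbad ⟨hlt, this⟩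
    exact Or.inl ⟨⟨hwT, hwN.1⟩, by omega⟩

theorem sub_two_mul_le_goodCount_perturb_and_badCount_perturb_le (hC : IsBalanced C)
    (hF : IsBipartiteBetween F S T) (hS : #S ≤ m) (hT : #T ≤ m) (hm : 3 * m < n) (hu : u ∈ S)
    (huv : s(u, v) ∈ F) :
    n - 2 * m ≤ goodCount (perturb C F) u v ∧ badCount (perturb C F) u v ≤ 4 * m - n := by
  have hv := hF.mem_right hu huv
  have hbad := badCount_perturb_le hC hF hS hT hm hu huv
  have hbadT := two_mul_card_rankGeNbrs_le hC hF hS hT hu huv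
  have hbadS := two_mul_card_rankGeNbrs_le hC hF.symm hT hS hv (Sym2.eq_swap ▸ huv)
  have hcardT := (card_rankGeNbrs_le (perturb C F) u v _).trans
    (card_sdiff_of_subset (hF.redNbrs_subset hu)).le
  have hcardS := (card_rankGeNbrs_le (perturb C F) v u _).trans
    (card_sdiff_of_subset (hF.symm.redNbrs_subset hv)).le
  have hdu := card_le_card (hF.redNbrs_subset hu)
  have hdv := card_le_card (hF.symm.redNbrs_subset hv)
  have hsum := goodCount_add_badCount (perturb C F) u v
  rw [rank_perturb_of_mem hC hF hu huv] at hsum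
  omega

end Perturbation

lemma card_filter_eq_or_eq {α β : Type*} [DecidableEq α] [DecidableEq β] (s : Finset α)
    (c : α → β) {i j : β} (hij : i ≠ j) :
    #(s.filter fun x => c x = i ∨ c x = j) = #(s.filter (c · = i)) + #(s.filter (c · = j)) := by
  rw [filter_or, card_union_of_disjoint (disjoint_filter.2 fun _ _ h => h ▸ hij)]

lemma isBalanced_Bgraph {n : ℕ} (c : Fin n → Fin 6) : IsBalanced (Bgraph c) := by
  intro u v w _ _ _
  unfold BalancedTriad Bgraph
  cases sixPart (c u) <;> cases sixPart (c v) <;> cases sixPart (c w) <;> rfl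

lemma isBipartiteBetween_of_subset_diffEdges {n : ℕ} {c : Fin n → Fin 6}
    {F : Finset (Sym2 (Fin n))} (hF : F ⊆ diffEdges (circular c 1) (Bgraph c)) :
    IsBipartiteBetween F (univ.filter fun u => c u = 1 ∨ c u = 4)
      (univ.filter fun u => c u = 2 ∨ c u = 5) := by
  have hclusters : ∀ i j : Fin 6, decide (circDist i j ≤ 1) ≠ (sixPart i == sixPart j) →
      (i = 1 ∨ i = 4) ∧ (j = 2 ∨ j = 5) ∨ (i = 2 ∨ i = 5) ∧ (j = 1 ∨ j = 4) := by
    decide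
  refine ⟨disjoint_filter.2 fun x _ => ?_, fun x y hxy => ?_⟩
  · generalize c x = i
    revert i
    decide
  obtain ⟨a, b, hab, -, hdiff⟩ := (mem_filter.1 (hF hxy)).2
  have := hclusters (c a) (c b) hdiff
  simp only [mem_filter, mem_univ, true_and]
  rcases Sym2.eq_iff.1 hab with ⟨rfl, rfl⟩ | ⟨rfl, rfl⟩ <;> tauto

theorem perturbed_Bn_good_bad_general (n : ℕ) (hn : 72 ≤ n) (c : Fin n → Fin 6)
    (hc1 : (univ.filter (fun u => c u = 1)).card = n / 8 + 1)
    (hc2 : (univ.filter (fun u => c u = 2)).card = n / 8 + 1)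
    (hc4 : (univ.filter (fun u => c u = 4)).card = n / 8 + 1)
    (hc5 : (univ.filter (fun u => c u = 5)).card = n / 8 + 1)
    (F : Finset (Sym2 (Fin n))) (hF : F ⊆ diffEdges (circular c 1) (Bgraph c)) :
    ∀ u v : Fin n, u ≠ v → s(u, v) ∈ F →
      ((n : ℝ) / 2 - 4 ≤ (goodCount (perturb (Bgraph c) F) u v : ℝ) ∧
        32 ≤ goodCount (perturb (Bgraph c) F) u v) ∧
      badCount (perturb (Bgraph c) F) u v ≤ 16 ∧
      2 * badCount (perturb (Bgraph c) F) u v ≤ goodCount (perturb (Bgraph c) F) u v := by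
  intro u v _ huv
  have hC := isBalanced_Bgraph c
  have hST := isBipartiteBetween_of_subset_diffEdges hF
  have hS := card_filter_eq_or_eq univ c (show (1 : Fin 6) ≠ 4 by decide)
  have hT := card_filter_eq_or_eq univ c (show (2 : Fin 6) ≠ 5 by decide)
  rw [hc1, hc4] at hS
  rw [hc2, hc5] at hT
  obtain ⟨hgood, hbad⟩ : n - 2 * (2 * (n / 8 + 1)) ≤ goodCount (perturb (Bgraph c) F) u v ∧
      badCount (perturb (Bgraph c) F) u v ≤ 4 * (2 * (n / 8 + 1)) - n := by
    rcases hST.mem_or_mem u v huv with ⟨hu, -⟩ | ⟨hu, -⟩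
    · exact sub_two_mul_le_goodCount_perturb_and_badCount_perturb_le hC hST
        (by omega) (by omega) (by omega) hu huv
    · exact sub_two_mul_le_goodCount_perturb_and_badCount_perturb_le hC hST.symm
        (by omega) (by omega) (by omega) hu huv
  refine ⟨⟨?_, by omega⟩, by omega, by omega⟩
  have : (n : ℝ) ≤ 2 * goodCount (perturb (Bgraph c) F) u v + 8 := by
    exact_mod_cast (show n ≤ 2 * goodCount (perturb (Bgraph c) F) u v + 8 by omega)
  linarith

/-- In `G_F` every red edge (edge of `F`) is contained in at least
`n/2 - 4 ≥ 32` good triads and at most `16` bad triads; in particular at least twice as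
many good triads as bad triads. -/
theorem perturbed_Bn_good_bad (n : ℕ) (hn : 72 ≤ n) (h8 : 8 ∣ n) (c : Fin n → Fin 6)
    (hc0 : (univ.filter (fun u => c u = 0)).card = n / 4 - 2)
    (hc3 : (univ.filter (fun u => c u = 3)).card = n / 4 - 2)
    (hc1 : (univ.filter (fun u => c u = 1)).card = n / 8 + 1)
    (hc2 : (univ.filter (fun u => c u = 2)).card = n / 8 + 1)
    (hc4 : (univ.filter (fun u => c u = 4)).card = n / 8 + 1)
    (hc5 : (univ.filter (fun u => c u = 5)).card = n / 8 + 1)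
    (F : Finset (Sym2 (Fin n))) (hF : F ⊆ diffEdges (circular c 1) (Bgraph c)) :
    ∀ u v : Fin n, u ≠ v → s(u, v) ∈ F →
      ((n : ℝ) / 2 - 4 ≤ (goodCount (perturb (Bgraph c) F) u v : ℝ) ∧
        32 ≤ goodCount (perturb (Bgraph c) F) u v) ∧
      badCount (perturb (Bgraph c) F) u v ≤ 16 ∧
      2 * badCount (perturb (Bgraph c) F) u v ≤ goodCount (perturb (Bgraph c) F) u v :=
  perturbed_Bn_good_bad_general n hn c hc1 hc2 hc4 hc5 F hF
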